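/- Fix a start index h : ℕ and sequences L, S : ℕ → ℝ with L j ≥ 0 and S j ≥ 0 for all j. For a real t ≥ 0, suppose l(t) is the greatest natural number l ≥ h with A(l) := ∑_{j=h}^{l} (L j + S j) ≤ t (taking the empty prefix, with A = 0 and segment sum 0, if no such l exists), and define W(t) = ∑_{j=h}^{l(t)} L j + min( L (l(t)+1), t − A(l(t)) ). Then W is monotone: for all 0 ≤ t ≤ t' such that the greatest elements defining l(t) and l(t') exist, W(t) ≤ W(t'). -/
import Mathlib


/-- Prefix execution-plus-suspension cost `A(l)` of segments `h, …, l`. -/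
def prefixCost (h : ℕ) (L S : ℕ → ℝ) (l : ℕ) : ℝ :=
  ∑ j ∈ Finset.Icc h l, (L j + S j)

/-- Workload value determined by a prefix-end index `l` and interval length `t`. -/
def workloadVal (h : ℕ) (L S : ℕ → ℝ) (t : ℝ) (l : ℕ) : ℝ :=
  (∑ j ∈ Finset.Icc h l, L j) + min (L (l + 1)) (t - prefixCost h L S l)

/-- The workload function of a self-suspension task is monotone
nondecreasing in the interval length, when the greatest prefix-end indices
defining it exist. -/
theorem workload_monotone
    (h : ℕ) (L S : ℕ → ℝ) (hL : ∀ j, 0 ≤ L j) (hS : ∀ j, 0 ≤ S j)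
    (t t' : ℝ) (ht : 0 ≤ t) (htt' : t ≤ t')
    (lt lt' : ℕ)
    (hlt : h ≤ lt ∧ prefixCost h L S lt ≤ t ∧
      ∀ l, h ≤ l → prefixCost h L S l ≤ t → l ≤ lt)
    (hlt' : h ≤ lt' ∧ prefixCost h L S lt' ≤ t' ∧
      ∀ l, h ≤ l → prefixCost h L S l ≤ t' → l ≤ lt') :
    workloadVal h L S t lt ≤ workloadVal h L S t' lt' := by

  obtain ⟨hh, hA, hmax⟩ := hlt
  obtain ⟨hh', hA', hmax'⟩ := hlt'
  have hle : lt ≤ lt' := hmax' lt hh (le_trans hA htt')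
  rcases eq_or_lt_of_le hle with heq | hlt2
  · subst heq
    unfold workloadVal
    have : t - prefixCost h L S lt ≤ t' - prefixCost h L S lt := by linarith
    exact add_le_add le_rfl (min_le_min le_rfl this)
  · -- lt < lt'
    unfold workloadVal
    have h1 : min (L (lt + 1)) (t - prefixCost h L S lt) ≤ L (lt + 1) := min_le_left _ _
    have h2 : (∑ j ∈ Finset.Icc h lt, L j) + L (lt + 1) = ∑ j ∈ Finset.Icc h (lt + 1), L j := by
      rw [Finset.sum_Icc_succ_top (by omega : h ≤ lt + 1)]
    have h3 : (∑ j ∈ Finset.Icc h (lt + 1), L j) ≤ ∑ j ∈ Finset.Icc h lt', L j := by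
      apply Finset.sum_le_sum_of_subset_of_nonneg
      · apply Finset.Icc_subset_Icc_right; omega
      · intro i _ _; exact hL i
    have h4 : 0 ≤ min (L (lt' + 1)) (t' - prefixCost h L S lt') :=
      le_min (hL _) (by linarith)
    linarith
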